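/- Let M : L²(ℝ³; ℂ) →L[ℂ] L²(ℝ³; ℂ) be a compact continuous linear operator. Then for every ε > 0 there exists r > 0 such that for every f ∈ L²(ℝ³; ℂ) that vanishes almost everywhere outside the closed ball of radius r centered at the origin, one has ‖M f‖ ≤ ε ‖f‖. -/

import Mathlib

/-!
A vector of norm at most one supported in a small ball is weakly small: `⟪w, g⟫` only sees the
restriction of `w` to the ball, whose `L²` norm tends to zero with the volume of the ball by
absolute continuity of the integral. A compact operator turns bounded weakly null sequences into
norm null ones, because every cluster point `y` of `T gₙ` satisfies `‖y‖² = lim ⟪T† y, gₙ⟫ = 0`.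
Normalizing a sequence of counterexamples supported in balls of radius `1 / (n + 1)` therefore
gives unit vectors `gₙ` with `ε < ‖M gₙ‖` and `M gₙ → 0`.
-/

open MeasureTheory Filter Metric Topology
open scoped InnerProductSpace ENNReal

section WeakToNorm

variable {𝕜 E F ι : Type*} [RCLike 𝕜] [NormedAddCommGroup E] [InnerProductSpace 𝕜 E]
  {l : Filter ι}

theorem tendsto_zero_of_isCompact_of_tendsto_inner {K : Set E} (hK : IsCompact K) {u : ι → E}
    (hu : ∀ i, u i ∈ K) (hweak : ∀ y, Tendsto (fun i => ⟪y, u i⟫_𝕜) l (𝓝 0)) :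
    Tendsto u l (𝓝 0) := by
  refine hK.tendsto_nhds_of_unique_mapClusterPt (Eventually.of_forall hu) fun x _ hx => ?_
  have hself : MapClusterPt ⟪x, x⟫_𝕜 l (fun i => ⟪x, u i⟫_𝕜) :=
    hx.continuousAt_comp (continuous_const.inner continuous_id).continuousAt
  exact (inner_self_eq_zero (𝕜 := 𝕜)).mp
    (eq_of_nhds_neBot (ClusterPt.mono hself (hweak x)).neBot)

variable [CompleteSpace E] [NormedAddCommGroup F] [InnerProductSpace 𝕜 F] [CompleteSpace F]

theorem IsCompactOperator.tendsto_zero_of_tendsto_inner {T : E →L[𝕜] F}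
    (hT : IsCompactOperator T) {g : ι → E} (hg : Bornology.IsBounded (Set.range g))
    (hweak : ∀ w, Tendsto (fun i => ⟪w, g i⟫_𝕜) l (𝓝 0)) :
    Tendsto (fun i => T (g i)) l (𝓝 0) :=
  tendsto_zero_of_isCompact_of_tendsto_inner (hT.isCompact_closure_image_of_bounded hg)
    (fun i => subset_closure ⟨g i, ⟨i, rfl⟩, rfl⟩) fun y => by
      simpa only [ContinuousLinearMap.adjoint_inner_left] using
        hweak (ContinuousLinearMap.adjoint T y)

end WeakToNorm

namespace MeasureTheory

variable {α E ι : Type*} {m : MeasurableSpace α} {μ : Measure α} {l : Filter ι}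
  [NormedAddCommGroup E]

theorem MemLp.tendsto_eLpNorm_indicator {p : ℝ≥0∞} (hp : 1 ≤ p) (hp_top : p ≠ ∞) {f : α → E}
    (hf : MemLp f p μ) {s : ι → Set α} (hs : ∀ i, MeasurableSet (s i))
    (hμs : Tendsto (fun i => μ (s i)) l (𝓝 0)) :
    Tendsto (fun i => eLpNorm ((s i).indicator f) p μ) l (𝓝 0) := by
  refine ENNReal.tendsto_nhds_zero.2 fun ε hε => ?_
  obtain ⟨η, -, hη_pos, hη_le⟩ := ENNReal.lt_iff_exists_real_btwn.1 hε
  obtain ⟨δ, hδ, hsmall⟩ := hf.eLpNorm_indicator_le hp hp_top (ENNReal.ofReal_pos.1 hη_pos)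
  filter_upwards [ENNReal.tendsto_nhds_zero.1 hμs _ (ENNReal.ofReal_pos.2 hδ)] with i hi
  exact (hsmall _ (hs i) hi).trans hη_le.le

theorem tendsto_measure_closedBall_zero [MetricSpace α] [OpensMeasurableSpace α] [ProperSpace α]
    (μ : Measure α) [IsFiniteMeasureOnCompacts μ] [NullSingletonClass μ] (x : α) :
    Tendsto (fun r => μ (closedBall x r)) (𝓝 0) (𝓝 0) := by
  have hthick := tendsto_measure_cthickening_of_isCompact (μ := μ) (isCompact_singleton (x := x))
  rw [measure_singleton] at hthick
  exact tendsto_of_tendsto_of_tendsto_of_le_of_le tendsto_const_nhds hthick (fun _ => zero_le)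
    fun r => measure_mono (closedBall_subset_cthickening_singleton x r)

variable {𝕜 : Type*} [RCLike 𝕜] [InnerProductSpace 𝕜 E]

theorem L2.norm_inner_le_eLpNorm_indicator_mul_norm {s : Set α} (hs : MeasurableSet s)
    (f g : Lp E 2 μ) (hg : ∀ᵐ x ∂μ, x ∉ s → g x = 0) :
    ‖⟪f, g⟫_𝕜‖ ≤ (eLpNorm (s.indicator f) 2 μ).toReal * ‖g‖ := by
  have hfs : MemLp (s.indicator f) 2 μ := (Lp.memLp f).indicator hs
  have hinner : ⟪f, g⟫_𝕜 = ⟪hfs.toLp _, g⟫_𝕜 := by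
    rw [L2.inner_def, L2.inner_def]
    refine integral_congr_ae ?_
    filter_upwards [hfs.coeFn_toLp, hg] with x hfx hgx
    by_cases hxs : x ∈ s
    · simp [hfx, hxs]
    · simp [hgx hxs]
  rw [hinner, ← Lp.norm_toLp _ hfs]
  exact norm_inner_le_norm _ _

theorem L2.tendsto_inner_of_ae_eq_zero_off {s : ι → Set α} (hs : ∀ i, MeasurableSet (s i))
    (hμs : Tendsto (fun i => μ (s i)) l (𝓝 0)) {g : ι → Lp E 2 μ} (hg_norm : ∀ i, ‖g i‖ ≤ 1)
    (hg : ∀ i, ∀ᵐ x ∂μ, x ∉ s i → g i x = 0) (f : Lp E 2 μ) :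
    Tendsto (fun i => ⟪f, g i⟫_𝕜) l (𝓝 0) := by
  have hf_small := (ENNReal.tendsto_toReal ENNReal.zero_ne_top).comp
    ((Lp.memLp f).tendsto_eLpNorm_indicator one_le_two ENNReal.ofNat_ne_top hs hμs)
  refine squeeze_zero_norm (fun i => ?_) (by simpa using hf_small)
  exact (L2.norm_inner_le_eLpNorm_indicator_mul_norm (hs i) f (g i) (hg i)).trans
    (mul_le_of_le_one_right ENNReal.toReal_nonneg (hg_norm i))

end MeasureTheory

theorem compact_operator_small_on_small_balls
    (M : Lp ℂ 2 (volume : Measure (EuclideanSpace ℝ (Fin 3))) →L[ℂ]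
         Lp ℂ 2 (volume : Measure (EuclideanSpace ℝ (Fin 3))))
    (hM : IsCompactOperator M) :
    ∀ ε > (0 : ℝ), ∃ r > (0 : ℝ),
      ∀ f : Lp ℂ 2 (volume : Measure (EuclideanSpace ℝ (Fin 3))),
        (∀ᵐ x ∂(volume : Measure (EuclideanSpace ℝ (Fin 3))),
          x ∉ Metric.closedBall (0 : EuclideanSpace ℝ (Fin 3)) r → f x = 0) →
        ‖M f‖ ≤ ε * ‖f‖ := by
  intro ε hε
  by_contra! hbad
  choose f hf_supp hf_gt using fun n : ℕ => hbad (1 / (n + 1)) Nat.one_div_pos_of_nat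
  have hf_pos : ∀ n, 0 < ‖f n‖ := fun n => norm_pos_iff.2 fun h0 => by
    simpa [h0] using hf_gt n
  set g := fun n => (‖f n‖⁻¹ : ℂ) • f n
  have hg_norm : ∀ n, ‖g n‖ ≤ 1 := fun n => by
    simp [g, norm_smul, inv_mul_cancel₀ (hf_pos n).ne']
  have hMg : ∀ n, ε < ‖M (g n)‖ := fun n => by
    simpa [g, norm_smul, lt_inv_mul_iff₀ (hf_pos n), mul_comm] using hf_gt n
  have hg_supp : ∀ n : ℕ, ∀ᵐ x ∂volume, x ∉ closedBall 0 (1 / ((n : ℝ) + 1)) → g n x = 0 :=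
    fun n => by
      filter_upwards [hf_supp n, Lp.coeFn_smul (‖f n‖⁻¹ : ℂ) (f n)] with x hfx hgx hx
      simp [g, hgx, hfx hx]
  have hballs :=
    (tendsto_measure_closedBall_zero (volume : Measure (EuclideanSpace ℝ (Fin 3))) 0).comp
      tendsto_one_div_add_atTop_nhds_zero_nat
  have hMg_lim := hM.tendsto_zero_of_tendsto_inner
    (isBounded_iff_forall_norm_le.2 ⟨1, by simpa using hg_norm⟩)
    (L2.tendsto_inner_of_ae_eq_zero_off (fun _ => measurableSet_closedBall) hballs hg_norm hg_supp)
  obtain ⟨n, hn⟩ := (hMg_lim.norm.eventually (gt_mem_nhds (by simpa using hε))).exists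
  exact (hMg n).not_gt hn
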